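/- Let φ : (R, m) → (S, mS) be a flat local homomorphism of commutative noetherian local rings inducing an isomorphism on residue fields, and let C be an m-adically complete R-module. Then Hom_R(S/φ(R), C) = 0. -/

import Mathlib

open IsLocalRing

/-!
Residue fields agree, so `S = φ(R) + mS`; hence the cokernel `M = S/φ(R)` satisfies `m • M = M`, and then
`m^n • M = M` for every `n`. A linear map `f : M → C` therefore sends every element into
`⋂ₙ mⁿ C`, which is zero because `C` is `m`-adically Hausdorff.
-/

theorem Submodule.pow_smul_top_eq_top {R M : Type*} [CommRing R] [AddCommGroup M] [Module R M]
    {I : Ideal R} (h : I • (⊤ : Submodule R M) = ⊤) (n : ℕ) : I ^ n • (⊤ : Submodule R M) = ⊤ := by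
  induction n with
  | zero => rw [pow_zero, Ideal.one_eq_top, Submodule.top_smul]
  | succ n ih => rw [pow_succ, ← smul_eq_mul, Submodule.smul_assoc, h, ih]

theorem IsHausdorff.subsingleton_linearMap_of_smul_top_eq_top {R M C : Type*} [CommRing R]
    [AddCommGroup M] [Module R M] [AddCommGroup C] [Module R C] {I : Ideal R} [IsHausdorff I C]
    (h : I • (⊤ : Submodule R M) = ⊤) : Subsingleton (M →ₗ[R] C) := by
  refine subsingleton_of_forall_eq 0 fun f => LinearMap.ext fun x => ?_
  refine IsHausdorff.haus ‹_› (f x) fun n => SModEq.zero.mpr ?_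
  have hx : f x ∈ (I ^ n • ⊤ : Submodule R M).map f :=
    Submodule.mem_map_of_mem (by rw [Submodule.pow_smul_top_eq_top h]; trivial)
  rw [Submodule.map_smul''] at hx
  exact Submodule.smul_mono le_rfl le_top hx

theorem Algebra.smul_top_cokernel_eq_top {R S : Type*} [CommRing R] [CommRing S] [Algebra R S]
    {I : Ideal R}
    (h : LinearMap.range (Algebra.linearMap R S) ⊔ (I.map (algebraMap R S)).restrictScalars R = ⊤) :
    I • (⊤ : Submodule R (S ⧸ LinearMap.range (Algebra.linearMap R S))) = ⊤ := by
  set N := LinearMap.range (Algebra.linearMap R S)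
  rw [← N.range_mkQ, LinearMap.range_eq_map, ← Submodule.map_smul'', Ideal.smul_top_eq_map, ← h,
    Submodule.map_sup, Submodule.mkQ_map_self, bot_sup_eq]

theorem IsLocalRing.range_algebraMap_sup_maximalIdeal_eq_top {R S : Type*} [CommRing R]
    [CommRing S] [IsLocalRing R] [IsLocalRing S] [Algebra R S] [IsLocalHom (algebraMap R S)]
    (hres : Function.Surjective (ResidueField.map (algebraMap R S))) :
    LinearMap.range (Algebra.linearMap R S) ⊔ (maximalIdeal S).restrictScalars R = ⊤ := by
  refine eq_top_iff.mpr fun s _ => ?_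
  obtain ⟨r', hr⟩ := hres (residue S s)
  obtain ⟨r, rfl⟩ := residue_surjective r'
  rw [ResidueField.map_residue] at hr
  have hsub : s - algebraMap R S r ∈ maximalIdeal S := by
    rw [← residue_eq_zero_iff, map_sub, hr, sub_self]
  exact Submodule.mem_sup.mpr ⟨_, ⟨r, rfl⟩, _, hsub, add_sub_cancel _ _⟩

theorem stmt_10_general (R S C : Type) [CommRing R] [CommRing S]
    [IsLocalRing R] [IsLocalRing S] [Algebra R S]
    [IsLocalHom (algebraMap R S)]
    (hmax : (maximalIdeal R).map (algebraMap R S) = maximalIdeal S)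
    (hres : Function.Bijective (ResidueField.map (algebraMap R S)))
    [AddCommGroup C] [Module R C] [IsAdicComplete (maximalIdeal R) C] :
    Subsingleton ((S ⧸ LinearMap.range (Algebra.linearMap R S)) →ₗ[R] C) := by
  refine IsHausdorff.subsingleton_linearMap_of_smul_top_eq_top (I := maximalIdeal R) ?_
  apply Algebra.smul_top_cokernel_eq_top
  rw [hmax]
  exact range_algebraMap_sup_maximalIdeal_eq_top hres.2

/-- Let `φ : (R, m) → (S, mS)` be a flat local homomorphism of commutative noetherian local
rings inducing an isomorphism on residue fields, and let `C` be an `m`-adically complete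
`R`-module.  Then `Hom_R(S/φ(R), C) = 0`. -/
theorem stmt_10 (R S C : Type) [CommRing R] [CommRing S] [IsNoetherianRing R] [IsNoetherianRing S]
    [IsLocalRing R] [IsLocalRing S] [Algebra R S] [Module.Flat R S]
    [IsLocalHom (algebraMap R S)]
    (hmax : (maximalIdeal R).map (algebraMap R S) = maximalIdeal S)
    (hres : Function.Bijective (ResidueField.map (algebraMap R S)))
    [AddCommGroup C] [Module R C] [IsAdicComplete (maximalIdeal R) C] :
    Subsingleton ((S ⧸ LinearMap.range (Algebra.linearMap R S)) →ₗ[R] C) :=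
  stmt_10_general R S C hmax hres
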